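/- arXiv:1909.01414 — 3 statements merged into one kernel-verified Lean document; each statement's English description precedes it below -/
import Mathlib

section
/- κ is full and faithful on function sets: for A B : ZFSet, the set-theoretic function graphs from A to B are in bijection with the type-theoretic functions between the member types; precisely, there is an equivalence of types between {f : ZFSet // ZFSet.IsFunc A B f} and ({x : ZFSet // x ∈ A} → {y : ZFSet // y ∈ B}), where a graph f is sent to the function assigning to each x ∈ A the unique y with ZFSet.pair x y ∈ f. -/
universe u

/-- `κ` is full and faithful on function sets: the set-theoretic function
graphs from `A` to `B` are in bijection with the type-theoretic functions
between the member types, a graph `f` being sent to the function assigning to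
each `x ∈ A` the unique `y` with `pair x y ∈ f`. -/
theorem funs_equiv_pi (A B : ZFSet.{u}) :
    ∃ e : {f : ZFSet.{u} // ZFSet.IsFunc A B f} ≃
        ({x : ZFSet.{u} // x ∈ A} → {y : ZFSet.{u} // y ∈ B}),
      ∀ (f : {f : ZFSet.{u} // ZFSet.IsFunc A B f}) (x : {x : ZFSet.{u} // x ∈ A}),
        ZFSet.pair x.1 (e f x).1 ∈ f.1 := by
  classical
  -- forward map
  have toFun : ∀ (f : {f : ZFSet.{u} // ZFSet.IsFunc A B f})
      (x : {x : ZFSet.{u} // x ∈ A}),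
      {y : ZFSet.{u} // y ∈ B ∧ ZFSet.pair x.1 y ∈ f.1} := by
    intro f x
    have h := f.2.2 x.1 x.2
    refine ⟨Classical.choose h.exists, ?_, Classical.choose_spec h.exists⟩
    have hm := Classical.choose_spec h.exists
    exact (ZFSet.pair_mem_prod.1 (f.2.1 hm)).2
  set F : {f : ZFSet.{u} // ZFSet.IsFunc A B f} →
      ({x : ZFSet.{u} // x ∈ A} → {y : ZFSet.{u} // y ∈ B}) :=
    fun f x => ⟨(toFun f x).1, (toFun f x).2.1⟩ with hF
  have hFmem : ∀ f x, ZFSet.pair x.1 (F f x).1 ∈ f.1 := fun f x => (toFun f x).2.2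
  -- inverse map
  let Gfun : ({x : ZFSet.{u} // x ∈ A} → {y : ZFSet.{u} // y ∈ B}) →
      ZFSet.{u} → ZFSet.{u} :=
    fun g z => if h : z ∈ A then (g ⟨z, h⟩).1 else ∅
  let G : ({x : ZFSet.{u} // x ∈ A} → {y : ZFSet.{u} // y ∈ B}) →
      {f : ZFSet.{u} // ZFSet.IsFunc A B f} :=
    fun g => ⟨@ZFSet.map (Gfun g) (Classical.allZFSetDefinable _) A, by
      rw [@ZFSet.map_isFunc _ (Classical.allZFSetDefinable _)]
      intro z hz
      simp only [Gfun, dif_pos hz]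
      exact (g ⟨z, hz⟩).2⟩
  have pairG : ∀ g (x : {x : ZFSet.{u} // x ∈ A}),
      ZFSet.pair x.1 (g x).1 ∈ (G g).1 := by
    intro g x
    refine (@ZFSet.mem_map _ (Classical.allZFSetDefinable _) _ _).2
      ⟨x.1, x.2, ?_⟩
    simp only [Gfun, dif_pos x.2]
  have uniq : ∀ (f : {f : ZFSet.{u} // ZFSet.IsFunc A B f}) (x : ZFSet)
      (hx : x ∈ A) (y : ZFSet), ZFSet.pair x y ∈ f.1 → y = (F f ⟨x, hx⟩).1 := by
    intro f x hx y hy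
    obtain ⟨w, _, hw⟩ := f.2.2 x hx
    rw [hw y hy, hw _ (hFmem f ⟨x, hx⟩)]
  refine ⟨⟨F, G, ?_, ?_⟩, hFmem⟩
  · intro f
    apply Subtype.ext
    refine ZFSet.ext fun z => ⟨fun hz => ?_, fun hz => ?_⟩
    · -- z ∈ G (F f) → z ∈ f
      obtain ⟨w, hw, hwe⟩ := (@ZFSet.mem_map _ (Classical.allZFSetDefinable _) _ _).1 hz
      subst hwe
      have : Gfun (F f) w = (F f ⟨w, hw⟩).1 := by simp only [Gfun, dif_pos hw]
      rw [this]
      exact hFmem f ⟨w, hw⟩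
    · obtain ⟨a, ha, b, _, rfl⟩ := ZFSet.mem_prod.1 (f.2.1 hz)
      have := uniq f a ha b hz
      subst this
      exact pairG (F f) ⟨a, ha⟩
  · intro g
    funext x
    apply Subtype.ext
    exact (uniq (G g) x.1 x.2 (g x).1 (pairG g x)).symm
end

section
/- Set-theoretic Π-construction commutes with taking member setoids: for every A : ZFSet and every family B : {x : ZFSet // x ∈ A} → ZFSet, there exists P : ZFSet such that for all f : ZFSet, f ∈ P ↔ ((∀ z ∈ f, ∃ (a : {x : ZFSet // x ∈ A}) (b : ZFSet), b ∈ B a ∧ z = ZFSet.pair a b) ∧ ∀ a : {x : ZFSet // x ∈ A}, ∃! b : ZFSet, b ∈ B a ∧ ZFSet.pair a b ∈ f); consequently there is an equivalence of types {f : ZFSet // f ∈ P} ≃ (∀ a : {x : ZFSet // x ∈ A}, {y : ZFSet // y ∈ B a}). -/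
universe u

/-!
Every dependent choice `g : ∀ a ∈ A, B a` has a graph `{(a, g a) | a ∈ A}`, which is a set since
`A` is small. The graphs are pairwise distinct by injectivity of the Kuratowski pair, and the
Π-type over a small index type with small fibres is small, so the graphs of all choices form a
set `pi A B` that is in bijection with the Π-type. A set belongs to it exactly when it consists
of pairs `(a, b)` with `b ∈ B a` and has exactly one such pair over each `a ∈ A`.
-/

namespace ZFSet

section Graph

variable {A : ZFSet.{u}}

noncomputable def graph (A : ZFSet.{u}) (g : {x // x ∈ A} → ZFSet.{u}) : ZFSet.{u} :=
  range fun a => pair a.1 (g a)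

theorem mem_graph {g : {x // x ∈ A} → ZFSet.{u}} {z : ZFSet.{u}} :
    z ∈ graph A g ↔ ∃ a, pair a.1 (g a) = z :=
  mem_range

theorem pair_mem_graph {g : {x // x ∈ A} → ZFSet.{u}} (a : {x // x ∈ A}) {b : ZFSet.{u}} :
    pair a.1 b ∈ graph A g ↔ g a = b := by
  simp only [mem_graph, pair_inj]
  constructor
  · rintro ⟨a', ha, hb⟩
    rwa [← Subtype.ext ha]
  · rintro rfl
    exact ⟨a, rfl, rfl⟩

theorem graph_injective : Function.Injective (graph A) := by
  intro g g' h
  funext a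
  rw [← pair_mem_graph, h, pair_mem_graph]

end Graph

section Pi

variable {A : ZFSet.{u}} {B : {x // x ∈ A} → ZFSet.{u}}

noncomputable def pi (A : ZFSet.{u}) (B : {x // x ∈ A} → ZFSet.{u}) : ZFSet.{u} :=
  range fun g : ∀ a, {y // y ∈ B a} => graph A fun a => (g a).1

theorem mem_pi {f : ZFSet.{u}} :
    f ∈ pi A B ↔ ∃ g : ∀ a, {y // y ∈ B a}, graph A (fun a => (g a).1) = f :=
  mem_range

theorem mem_pi_iff {f : ZFSet.{u}} :
    f ∈ pi A B ↔
      (∀ z ∈ f, ∃ (a : {x // x ∈ A}) (b : ZFSet.{u}), b ∈ B a ∧ z = pair a.1 b) ∧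
        ∀ a : {x // x ∈ A}, ∃! b : ZFSet.{u}, b ∈ B a ∧ pair a.1 b ∈ f := by
  rw [mem_pi]
  constructor
  · rintro ⟨g, rfl⟩
    refine ⟨fun z hz => ?_, fun a => ⟨g a, ⟨(g a).2, (pair_mem_graph a).2 rfl⟩, ?_⟩⟩
    · obtain ⟨a, rfl⟩ := mem_graph.1 hz
      exact ⟨a, g a, (g a).2, rfl⟩
    · rintro b ⟨-, hb⟩
      exact ((pair_mem_graph a).1 hb).symm
  · rintro ⟨hpairs, hunique⟩
    choose g hgB hgf using fun a => (hunique a).exists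
    refine ⟨fun a => ⟨g a, hgB a⟩, ext fun z => ⟨fun hz => ?_, fun hz => ?_⟩⟩
    · obtain ⟨a, rfl⟩ := mem_graph.1 hz
      exact hgf a
    · obtain ⟨a, b, hb, rfl⟩ := hpairs z hz
      exact (pair_mem_graph a).2 ((hunique a).unique ⟨hgB a, hgf a⟩ ⟨hb, hz⟩)

noncomputable def piEquiv (A : ZFSet.{u}) (B : {x // x ∈ A} → ZFSet.{u}) :
    {f // f ∈ pi A B} ≃ ∀ a, {y // y ∈ B a} :=
  (Equiv.subtypeEquivRight fun _ => mem_pi).trans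
    (Equiv.ofInjective _ fun _ _ h =>
      funext fun a => Subtype.ext (congrFun (graph_injective h) a)).symm

end Pi

end ZFSet

/-- The set-theoretic Π-construction commutes with taking member setoids:
there is a set `P` of graphs of dependent functions picking for each `a ∈ A`
an element of `B a`, and its members form a type equivalent to the
corresponding Π-type. -/
theorem piV_members (A : ZFSet.{u}) (B : {x : ZFSet.{u} // x ∈ A} → ZFSet.{u}) :
    ∃ P : ZFSet.{u},
      (∀ f : ZFSet.{u}, f ∈ P ↔
        ((∀ z ∈ f, ∃ (a : {x : ZFSet.{u} // x ∈ A}) (b : ZFSet.{u}),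
            b ∈ B a ∧ z = ZFSet.pair a.1 b) ∧
          ∀ a : {x : ZFSet.{u} // x ∈ A},
            ∃! b : ZFSet.{u}, b ∈ B a ∧ ZFSet.pair a.1 b ∈ f)) ∧
      Nonempty ({f : ZFSet.{u} // f ∈ P} ≃
        (∀ a : {x : ZFSet.{u} // x ∈ A}, {y : ZFSet.{u} // y ∈ B a})) :=
  ⟨ZFSet.pi A B, fun _ => ZFSet.mem_pi_iff, ⟨ZFSet.piEquiv A B⟩⟩
end

section
/- Replacement scheme for setoids (the image of a setoid in a classoid is a setoid): let A : Type u, let B : Type (u+1) carry an equivalence relation r, and let f : A → B. Equip A with the induced equivalence relation a ≈ a' ↔ r (f a) (f a'). Then the quotient Quotient of A by ≈ (which lives in Type u) admits an injective map into the quotient of B by r, whose range is exactly the image of the composite A → B → Quotient r. -/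
universe u

/-- Replacement scheme for setoids: the image of a setoid in a classoid is a
setoid. Given `f : A → B` where `B : Type (u+1)` carries an equivalence
relation `r`, equip `A` with the induced relation `a ≈ a' ↔ r (f a) (f a')`
(i.e. `Setoid.comap f r`). Then the quotient of `A` (which lives in `Type u`)
injects into the quotient of `B` with range exactly the image of the
composite `A → B → Quotient r`. -/
theorem setoid_replacement {A : Type u} {B : Type (u + 1)}
    (r : Setoid B) (f : A → B) :
    ∃ g : Quotient (Setoid.comap f r) → Quotient r,
      Function.Injective g ∧
      Set.range g = Set.range (fun a : A => Quotient.mk r (f a)) := by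
  rw [Setoid.comap_eq]
  exact ⟨Setoid.kerLift _, Setoid.kerLift_injective _, Setoid.range_kerLift_eq_range _⟩
end
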